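/- arXiv:0806.2180 — 4 statements merged into one kernel-verified Lean document; each statement's English description precedes it below -/
import Mathlib

section
/- Let μ > 0, q ≠ 0, m = sqrt(μ² + q²), and Φ⁺_μ(r) = sqrt(1 + m/r + μ²/(4r²)). Then the function u⁺_μ(r) = Φ⁺_μ(r) - 1 - μ/(2r), extended by u⁺_μ(0) = m/μ - 1, is continuous at r = 0 with limit m/μ - 1, and its derivative has limit -q²/μ³ as r → 0⁺. -/
/-!
Multiplying by the conjugate, for `r > 0` one has
`u⁺_μ(r) = (2r + 2m) / (√(4r² + 4mr + μ²) + μ) - 1`, and the right-hand side is smooth at `r = 0`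
because the radicand equals `μ² > 0` there. Both limits are therefore the value and the derivative
of this smooth function at `0`.
-/

open Filter Topology Set

theorem tendsto_deriv_nhdsWithin_of_eqOn_of_contDiffAt {𝕜 F : Type*} [NontriviallyNormedField 𝕜]
    [NormedAddCommGroup F] [NormedSpace 𝕜 F] {f u : 𝕜 → F} {s : Set 𝕜} {a : 𝕜}
    {n : WithTop ℕ∞} (hf : ContDiffAt 𝕜 n f a) (hn : n ≠ 0) (hs : IsOpen s) (hu : EqOn u f s) :
    Tendsto (deriv u) (𝓝[s] a) (𝓝 (deriv f a)) := by
  have hderiv : EqOn (deriv f) (deriv u) s := fun x hx =>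
    ((eventuallyEq_of_mem (hs.mem_nhds hx) hu).deriv_eq).symm
  have hcont : ContinuousAt (deriv f) a :=
    (hf.continuousAt_fderiv hn).clm_apply continuousAt_const
  exact tendsto_nhdsWithin_congr hderiv hcont.continuousWithinAt.tendsto

noncomputable def uPlusRationalized (m μ r : ℝ) : ℝ :=
  (2 * r + 2 * m) / (√(4 * r ^ 2 + 4 * m * r + μ ^ 2) + μ) - 1

section

variable {m μ : ℝ}

theorem sqrt_sub_one_sub_eq_uPlusRationalized (hμ : 0 < μ) (hm : 0 ≤ m) {r : ℝ} (hr : 0 < r) :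
    √(1 + m / r + μ ^ 2 / (4 * r ^ 2)) - 1 - μ / (2 * r) = uPlusRationalized m μ r := by
  set P := 4 * r ^ 2 + 4 * m * r + μ ^ 2
  have hP : 0 ≤ P := by positivity
  have hsqrt : √(1 + m / r + μ ^ 2 / (4 * r ^ 2)) = √P / (2 * r) := by
    rw [show 1 + m / r + μ ^ 2 / (4 * r ^ 2) = (√P / (2 * r)) ^ 2 by
      rw [div_pow, Real.sq_sqrt hP]; field_simp; ring]
    exact Real.sqrt_sq (by positivity)
  have hden : √P + μ ≠ 0 := by positivity
  rw [hsqrt, show uPlusRationalized m μ r = (2 * r + 2 * m) / (√P + μ) - 1 from rfl]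
  field_simp
  linear_combination Real.sq_sqrt hP

theorem uPlusRationalized_zero (hμ : 0 < μ) : uPlusRationalized m μ 0 = m / μ - 1 := by
  simp [uPlusRationalized, Real.sqrt_sq hμ.le]
  field_simp
  ring

theorem contDiffAt_uPlusRationalized (hμ : 0 < μ) {n : WithTop ℕ∞} :
    ContDiffAt ℝ n (uPlusRationalized m μ) 0 := by
  have hsqrt : ContDiffAt ℝ n (fun r : ℝ => √(4 * r ^ 2 + 4 * m * r + μ ^ 2)) 0 :=
    (by fun_prop : ContDiffAt ℝ n (fun r : ℝ => 4 * r ^ 2 + 4 * m * r + μ ^ 2) 0).sqrt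
      (by simp [hμ.ne'])
  refine ((contDiffAt_const.mul contDiffAt_id |>.add contDiffAt_const).div
    (hsqrt.add contDiffAt_const) ?_).sub contDiffAt_const
  simp [Real.sqrt_sq hμ.le, hμ.ne']

theorem hasDerivAt_uPlusRationalized_zero (hμ : 0 < μ) :
    HasDerivAt (uPlusRationalized m μ) ((μ ^ 2 - m ^ 2) / μ ^ 3) 0 := by
  have hP : HasDerivAt (fun r : ℝ => 4 * r ^ 2 + 4 * m * r + μ ^ 2) (4 * m) 0 := by
    simpa using (((hasDerivAt_pow 2 (0 : ℝ)).const_mul 4).fun_add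
      ((hasDerivAt_id (0 : ℝ)).const_mul (4 * m))).add_const (μ ^ 2)
  have hnum : HasDerivAt (fun r : ℝ => 2 * r + 2 * m) 2 0 := by
    simpa using ((hasDerivAt_id (0 : ℝ)).const_mul 2).add_const (2 * m)
  have hsqrt0 : √(4 * 0 ^ 2 + 4 * m * 0 + μ ^ 2) = μ := by simp [Real.sqrt_sq hμ.le]
  have hden := (hP.sqrt (by simp [hμ.ne'])).add_const μ
  rw [hsqrt0] at hden
  refine ((hnum.fun_div hden (by rw [hsqrt0]; positivity)).sub_const 1).congr_deriv ?_
  rw [hsqrt0]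
  field_simp
  ring

end

open Filter Topology Set in
theorem u_plus_limits_at_origin_general (μ q : ℝ) (hμ : 0 < μ) (m : ℝ)
    (hm : m = Real.sqrt (μ^2 + q^2))
    (u : ℝ → ℝ)
    (hu : ∀ r, u r = Real.sqrt (1 + m/r + μ^2/(4*r^2)) - 1 - μ/(2*r)) :
    Tendsto u (nhdsWithin 0 (Ioi 0)) (nhds (m/μ - 1)) ∧
    Tendsto (fun r => deriv u r) (nhdsWithin 0 (Ioi 0)) (nhds (-q^2/μ^3)) := by
  have hu_eq : EqOn u (uPlusRationalized m μ) (Ioi 0) := fun r hr => by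
    rw [hu, sqrt_sub_one_sub_eq_uPlusRationalized hμ (hm ▸ Real.sqrt_nonneg _) hr]
  have hsmooth := contDiffAt_uPlusRationalized (m := m) hμ (n := 1)
  constructor
  · rw [← uPlusRationalized_zero hμ]
    exact tendsto_nhdsWithin_congr (fun r hr => (hu_eq hr).symm)
      hsmooth.continuousAt.continuousWithinAt.tendsto
  · have hderiv0 : -q ^ 2 / μ ^ 3 = deriv (uPlusRationalized m μ) 0 := by
      rw [(hasDerivAt_uPlusRationalized_zero hμ).deriv, hm, Real.sq_sqrt (by positivity)]
      ring
    rw [hderiv0]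
    exact tendsto_deriv_nhdsWithin_of_eqOn_of_contDiffAt hsmooth one_ne_zero isOpen_Ioi hu_eq

open Filter Topology Set in
theorem u_plus_limits_at_origin (μ q : ℝ) (hμ : 0 < μ) (hq : q ≠ 0) (m : ℝ)
    (hm : m = Real.sqrt (μ^2 + q^2))
    (u : ℝ → ℝ)
    (hu : ∀ r, u r = Real.sqrt (1 + m/r + μ^2/(4*r^2)) - 1 - μ/(2*r)) :
    Tendsto u (nhdsWithin 0 (Ioi 0)) (nhds (m/μ - 1)) ∧
    Tendsto (fun r => deriv u r) (nhdsWithin 0 (Ioi 0)) (nhds (-q^2/μ^3)) :=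
  u_plus_limits_at_origin_general μ q hμ m hm u hu
end

section
/- Let J ≠ 0 and q² ≥ 3|J|, m ≥ |q|, μ ≥ 0, and Φ⁺(r) = sqrt(1 + m/r + μ²/(4r²)). Then for all r > 0 and θ ∈ [0, π]: q²/(4r⁴ Φ⁺(r)³) ≥ 9J² sin²θ/(4 r⁶ Φ⁺(r)⁷). -/
open Real

/-- `Φ⁴ ≥ q² / r²` for the Reissner–Nordström factor `Φ`, because `r Φ² = r + m + μ²/(4r) ≥ |q|`. -/
lemma sq_le_sq_mul_sqrt_pow_four {q m r : ℝ} (μ : ℝ) (hm : |q| ≤ m) (hr : 0 < r) :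
    q ^ 2 ≤ r ^ 2 * √(1 + m / r + μ ^ 2 / (4 * r ^ 2)) ^ 4 := by
  set A := 1 + m / r + μ ^ 2 / (4 * r ^ 2)
  have hm₀ : 0 ≤ m := (abs_nonneg q).trans hm
  have hA : 0 ≤ A := by positivity
  have hrA : r * A = r + m + μ ^ 2 / (4 * r) := by
    simp only [A]
    field_simp
  have hq : |q| ≤ r * A := by
    rw [hrA]
    have : 0 ≤ μ ^ 2 / (4 * r) := by positivity
    linarith
  calc q ^ 2 = |q| ^ 2 := (sq_abs q).symm
    _ ≤ (r * A) ^ 2 := pow_le_pow_left₀ (abs_nonneg q) hq 2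
    _ = r ^ 2 * √A ^ 4 := by rw [show √A ^ 4 = (√A ^ 2) ^ 2 by ring, sq_sqrt hA]; ring

lemma nine_mul_sq_le_pow_four {J q : ℝ} (h : 3 * |J| ≤ q ^ 2) : 9 * J ^ 2 ≤ q ^ 4 :=
  calc 9 * J ^ 2 = (3 * |J|) ^ 2 := by rw [mul_pow, sq_abs]; norm_num
    _ ≤ (q ^ 2) ^ 2 := pow_le_pow_left₀ (by positivity) h 2
    _ = q ^ 4 := by ring

theorem supersolution_inequality_general (J q m μ : ℝ) (hq : q^2 ≥ 3*|J|)
    (hm : m ≥ |q|) :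
    ∀ r θ : ℝ, 0 < r → θ ∈ Set.Icc 0 Real.pi →
      9*J^2*(Real.sin θ)^2 / (4*r^6*(Real.sqrt (1 + m/r + μ^2/(4*r^2)))^7)
        ≤ q^2 / (4*r^4*(Real.sqrt (1 + m/r + μ^2/(4*r^2)))^3) := by
  intro r θ hr _
  have hΦ₀ : 0 < √(1 + m / r + μ ^ 2 / (4 * r ^ 2)) := by
    have : 0 ≤ m := (abs_nonneg q).trans hm
    exact sqrt_pos.2 (by positivity)
  set Φ := √(1 + m / r + μ ^ 2 / (4 * r ^ 2))
  have key : 9 * J ^ 2 * sin θ ^ 2 ≤ q ^ 2 * (r ^ 2 * Φ ^ 4) :=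
    calc 9 * J ^ 2 * sin θ ^ 2 ≤ 9 * J ^ 2 * 1 :=
          mul_le_mul_of_nonneg_left (sin_sq_le_one θ) (by positivity)
      _ ≤ q ^ 2 * q ^ 2 := by linarith [nine_mul_sq_le_pow_four hq]
      _ ≤ q ^ 2 * (r ^ 2 * Φ ^ 4) :=
          mul_le_mul_of_nonneg_left (sq_le_sq_mul_sqrt_pow_four μ hm hr) (sq_nonneg q)
  calc 9 * J ^ 2 * sin θ ^ 2 / (4 * r ^ 6 * Φ ^ 7)
      = 9 * J ^ 2 * sin θ ^ 2 / (r ^ 2 * Φ ^ 4) / (4 * r ^ 4 * Φ ^ 3) := by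
        rw [div_div]; ring_nf
    _ ≤ q ^ 2 / (4 * r ^ 4 * Φ ^ 3) :=
        div_le_div_of_nonneg_right (div_le_of_le_mul₀ (by positivity) (sq_nonneg q) key)
          (by positivity)

theorem supersolution_inequality (J q m μ : ℝ) (hJ : J ≠ 0) (hq : q^2 ≥ 3*|J|)
    (hm : m ≥ |q|) (hμ : 0 ≤ μ) :
    ∀ r θ : ℝ, 0 < r → θ ∈ Set.Icc 0 Real.pi →
      9*J^2*(Real.sin θ)^2 / (4*r^6*(Real.sqrt (1 + m/r + μ^2/(4*r^2)))^7)
        ≤ q^2 / (4*r^4*(Real.sqrt (1 + m/r + μ^2/(4*r^2)))^3) :=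
  supersolution_inequality_general J q m μ hq hm
end

section
/- For μ ≥ 0, q ≠ 0, m = sqrt(μ² + q²), the radial function u⁺_μ(r) = sqrt(1 + m/r + μ²/(4r²)) - 1 - μ/(2r) satisfies the radial Laplace equation u'' + (2/r)u' = -q²/(4r⁴ (1 + m/r + μ²/(4r²))^(3/2)) for all r > 0. -/
/-!
For radial functions `f'' + (2/r) f' = (r f)'' / r`, and `r u(r) = √P(r) - r - μ/2` with
`P(r) = r² + m r + μ²/4`. For any quadratic `P = a r² + b r + c` one has
`(√P)'' = (4ac - b²) / (4 P^{3/2})`, and here `4ac - b² = μ² - m² = -q²`.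
-/

open Filter Topology

noncomputable def radialLaplacian (f : ℝ → ℝ) (r : ℝ) : ℝ :=
  deriv (deriv f) r + 2 / r * deriv f r

theorem deriv_deriv_id_mul {f : ℝ → ℝ} {r : ℝ} (hf : ContDiffAt ℝ 2 f r) :
    deriv (deriv fun x => x * f x) r = r * deriv (deriv f) r + 2 * deriv f r := by
  have hderiv : deriv (fun x => x * f x) =ᶠ[𝓝 r] fun x => f x + x * deriv f x := by
    filter_upwards [hf.eventually (by simp)] with x hx
    simpa using ((hasDerivAt_id' x).fun_mul (hx.differentiableAt (by simp)).hasDerivAt).deriv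
  have hf' : DifferentiableAt ℝ (deriv f) r :=
    (hf.derivWithin (m := 1) (by norm_num)).differentiableAt (by simp)
  rw [hderiv.deriv_eq, ((hf.differentiableAt (by simp)).hasDerivAt.fun_add
    ((hasDerivAt_id' r).fun_mul hf'.hasDerivAt)).deriv]
  ring

theorem radialLaplacian_eq_deriv_deriv_id_mul_div {f : ℝ → ℝ} {r : ℝ} (hr : r ≠ 0)
    (hf : ContDiffAt ℝ 2 f r) :
    radialLaplacian f r = deriv (deriv fun x => x * f x) r / r := by
  rw [radialLaplacian, deriv_deriv_id_mul hf]
  field_simp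

theorem deriv_deriv_sub_affine {f : ℝ → ℝ} {r : ℝ}
    (hf : ∀ᶠ x in 𝓝 r, DifferentiableAt ℝ f x) (α β : ℝ) :
    deriv (deriv fun x => f x - (α * x + β)) r = deriv (deriv f) r := by
  have hderiv : deriv (fun x => f x - (α * x + β)) =ᶠ[𝓝 r] fun x => deriv f x - α := by
    filter_upwards [hf] with x hx
    exact (hx.hasDerivAt.fun_sub (((hasDerivAt_id' x).const_mul α).add_const β)).deriv.trans
      (by ring)
  rw [hderiv.deriv_eq, deriv_sub_const]

theorem deriv_deriv_sqrt_quadratic {a b c r : ℝ} (hr : 0 < a * r ^ 2 + b * r + c) :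
    deriv (deriv fun x => √(a * x ^ 2 + b * x + c)) r
      = (4 * a * c - b ^ 2) / (4 * √(a * r ^ 2 + b * r + c) ^ 3) := by
  set P : ℝ → ℝ := fun x => a * x ^ 2 + b * x + c
  have hP : ∀ x, HasDerivAt P (2 * a * x + b) x := fun x => by
    refine ((((hasDerivAt_pow 2 x).const_mul a).fun_add
      ((hasDerivAt_id' x).const_mul b)).add_const c).congr_deriv ?_
    ring
  have hpos : ∀ᶠ x in 𝓝 r, 0 < P x := (hP r).continuousAt.eventually (lt_mem_nhds hr)
  have hderiv :
      deriv (fun x => √(P x)) =ᶠ[𝓝 r] fun x => (2 * a * x + b) / (2 * √(P x)) := by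
    filter_upwards [hpos] with x hx
    exact ((hP x).sqrt hx.ne').deriv
  have hs : 0 < √(P r) := Real.sqrt_pos.mpr hr
  rw [hderiv.deriv_eq, (((hasDerivAt_id' r).const_mul (2 * a) |>.add_const b).fun_div
    (((hP r).sqrt hr.ne').const_mul 2) (by positivity)).deriv]
  have hs2 : √(P r) ^ 2 = P r := Real.sq_sqrt hr.le
  generalize √(P r) = s at hs hs2 ⊢
  simp only [P] at hs2 ⊢
  field_simp
  linear_combination (16 * a) * hs2

theorem rpow_three_halves {x : ℝ} (hx : 0 ≤ x) : x ^ ((3 : ℝ) / 2) = √x ^ 3 := by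
  rw [Real.sqrt_eq_rpow, ← Real.rpow_mul_natCast hx]
  norm_num

noncomputable def uPlus (m μ r : ℝ) : ℝ :=
  √(1 + m / r + μ ^ 2 / (4 * r ^ 2)) - 1 - μ / (2 * r)

section uPlus

variable {m μ r : ℝ}

theorem mul_sqrt_eq_sqrt_quadratic (hr : 0 < r) :
    r * √(1 + m / r + μ ^ 2 / (4 * r ^ 2)) = √(r ^ 2 + m * r + μ ^ 2 / 4) := by
  rw [show r ^ 2 + m * r + μ ^ 2 / 4 = r ^ 2 * (1 + m / r + μ ^ 2 / (4 * r ^ 2)) by field_simp,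
    Real.sqrt_mul (sq_nonneg r), Real.sqrt_sq hr.le]

theorem id_mul_uPlus (hr : 0 < r) :
    r * uPlus m μ r = √(r ^ 2 + m * r + μ ^ 2 / 4) - (r + μ / 2) := by
  rw [uPlus, ← mul_sqrt_eq_sqrt_quadratic hr]
  field_simp
  ring

theorem contDiffAt_uPlus (hm : 0 ≤ m) (hr : 0 < r) : ContDiffAt ℝ 2 (uPlus m μ) r := by
  have hw : 1 + m / r + μ ^ 2 / (4 * r ^ 2) ≠ 0 := by positivity
  unfold uPlus
  fun_prop (disch := first | positivity | exact hw)

theorem radialLaplacian_uPlus (hm : 0 ≤ m) (hr : 0 < r) :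
    radialLaplacian (uPlus m μ) r
      = (μ ^ 2 - m ^ 2) / (4 * r ^ 4 * √(1 + m / r + μ ^ 2 / (4 * r ^ 2)) ^ 3) := by
  have hP : ∀ x, 0 < x → 0 < 1 * x ^ 2 + m * x + μ ^ 2 / 4 := fun x hx => by positivity
  have hru : (fun x => x * uPlus m μ x) =ᶠ[𝓝 r]
      fun x => √(1 * x ^ 2 + m * x + μ ^ 2 / 4) - (1 * x + μ / 2) := by
    filter_upwards [Ioi_mem_nhds hr] with x (hx : 0 < x)
    simpa only [one_mul] using id_mul_uPlus hx
  have hsqrt_diff : ∀ᶠ x in 𝓝 r,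
      DifferentiableAt ℝ (fun x => √(1 * x ^ 2 + m * x + μ ^ 2 / 4)) x := by
    filter_upwards [Ioi_mem_nhds hr] with x (hx : 0 < x)
    fun_prop (disch := exact (hP x hx).ne')
  rw [radialLaplacian_eq_deriv_deriv_id_mul_div hr.ne' (contDiffAt_uPlus hm hr),
    hru.deriv.deriv_eq, deriv_deriv_sub_affine hsqrt_diff, deriv_deriv_sqrt_quadratic (hP r hr),
    one_mul, ← mul_sqrt_eq_sqrt_quadratic hr]
  field_simp

end uPlus

theorem RN_laplacian_general (μ q : ℝ) (m : ℝ)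
    (hm : m = Real.sqrt (μ^2 + q^2))
    (u : ℝ → ℝ)
    (hu : ∀ r, u r = Real.sqrt (1 + m/r + μ^2/(4*r^2)) - 1 - μ/(2*r)) :
    ∀ r : ℝ, 0 < r →
      deriv (deriv u) r + (2/r) * deriv u r
        = -q^2 / (4*r^4 * (1 + m/r + μ^2/(4*r^2)) ^ ((3:ℝ)/2)) := by
  intro r hr
  have hm0 : 0 ≤ m := hm ▸ Real.sqrt_nonneg _
  have hm2 : m ^ 2 = μ ^ 2 + q ^ 2 := hm ▸ Real.sq_sqrt (by positivity)
  obtain rfl : u = uPlus m μ := funext hu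
  rw [← radialLaplacian, radialLaplacian_uPlus hm0 hr, rpow_three_halves (by positivity), hm2]
  ring

theorem RN_laplacian (μ q : ℝ) (hμ : 0 ≤ μ) (hq : q ≠ 0) (m : ℝ)
    (hm : m = Real.sqrt (μ^2 + q^2))
    (u : ℝ → ℝ)
    (hu : ∀ r, u r = Real.sqrt (1 + m/r + μ^2/(4*r^2)) - 1 - μ/(2*r)) :
    ∀ r : ℝ, 0 < r →
      deriv (deriv u) r + (2/r) * deriv u r
        = -q^2 / (4*r^4 * (1 + m/r + μ^2/(4*r^2)) ^ ((3:ℝ)/2)) :=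
  RN_laplacian_general μ q m hm u hu
end

section
/- For q > 0 and r > 0, define I₂(r) = (4J²√π/(5q⁶√r))·((128r⁴ + 192r³q + 48r²q² - 8q³r + 3q⁴)/(r+q)^(3/2) - 128r^(5/2)). Then I₁(r) - (1/5)·I₂(r) ≥ 0 for all r > 0, where I₁(r) = (4J²√π/(5q⁴√r))·((24r² + 40qr + 15q²)/(r+q)^(3/2) - 24√r). -/
/-!
Put `s = √r` and `t = √(r + q)`, so that `r = s²`, `q = t² - s²` and the half-integer powers
become `t³` and `s⁵`. In these variables `I₁ - I₂ / 5` is a rational function whose numerator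
factors as `8 (t - s)³ (9 t² + 12 s t - s²)`, which is positive because `0 < s < t`.
-/

lemma Real.rpow_natCast_div_two {x : ℝ} (n : ℕ) (hx : 0 ≤ x) : x ^ ((n : ℝ) / 2) = √x ^ n := by
  rw [Real.rpow_div_two_eq_sqrt _ hx, Real.rpow_natCast]

lemma I1_sub_I2_div_five_eq {K : Type*} [Field K] (a q r s t : K) (hq : q ≠ 0) (hs : s ≠ 0)
    (ht : t ≠ 0) (hr : s ^ 2 = r) (hrq : t ^ 2 = r + q) :
    a / (5 * q ^ 4 * s) * ((24 * r ^ 2 + 40 * q * r + 15 * q ^ 2) / t ^ 3 - 24 * s) -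
      a / (5 * q ^ 6 * s) * ((128 * r ^ 4 + 192 * r ^ 3 * q + 48 * r ^ 2 * q ^ 2 - 8 * q ^ 3 * r
        + 3 * q ^ 4) / t ^ 3 - 128 * s ^ 5) / 5 =
      a * (8 * (t - s) ^ 3 * (9 * t ^ 2 + 12 * s * t - s ^ 2)) / (25 * q ^ 6 * s) := by
  subst hr
  obtain rfl : q = t ^ 2 - s ^ 2 := by rw [hrq]; ring
  field_simp
  ring

theorem I1_minus_I2_div5_nonneg_general (J q : ℝ) (hq : 0 < q)
    (I₁ I₂ : ℝ → ℝ)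
    (hI₁ : ∀ r, I₁ r = (4*J^2*Real.sqrt Real.pi/(5*q^4*Real.sqrt r)) *
        ((24*r^2 + 40*q*r + 15*q^2)/(r+q) ^ ((3:ℝ)/2) - 24*Real.sqrt r))
    (hI₂ : ∀ r, I₂ r = (4*J^2*Real.sqrt Real.pi/(5*q^6*Real.sqrt r)) *
        ((128*r^4 + 192*r^3*q + 48*r^2*q^2 - 8*q^3*r + 3*q^4)/(r+q) ^ ((3:ℝ)/2)
          - 128*r ^ ((5:ℝ)/2))) :
    ∀ r, 0 < r → 0 ≤ I₁ r - I₂ r / 5 := by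
  intro r hr
  have hrq : 0 < r + q := by linarith
  have hs : 0 < √r := Real.sqrt_pos.mpr hr
  have hst : √r < √(r + q) := Real.sqrt_lt_sqrt hr.le (by linarith)
  have h32 : (r + q) ^ ((3 : ℝ) / 2) = √(r + q) ^ 3 := mod_cast Real.rpow_natCast_div_two 3 hrq.le
  have h52 : r ^ ((5 : ℝ) / 2) = √r ^ 5 := mod_cast Real.rpow_natCast_div_two 5 hr.le
  rw [hI₁, hI₂, h32, h52, I1_sub_I2_div_five_eq _ _ _ _ _ hq.ne' hs.ne' (hs.trans hst).ne'
    (Real.sq_sqrt hr.le) (Real.sq_sqrt hrq.le)]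
  have hts : 0 < √(r + q) - √r := sub_pos.mpr hst
  have hquad : 0 < 9 * √(r + q) ^ 2 + 12 * √r * √(r + q) - √r ^ 2 := by nlinarith
  positivity

theorem I1_minus_I2_div5_nonneg (J q : ℝ) (hJ : J ≠ 0) (hq : 0 < q)
    (I₁ I₂ : ℝ → ℝ)
    (hI₁ : ∀ r, I₁ r = (4*J^2*Real.sqrt Real.pi/(5*q^4*Real.sqrt r)) *
        ((24*r^2 + 40*q*r + 15*q^2)/(r+q) ^ ((3:ℝ)/2) - 24*Real.sqrt r))
    (hI₂ : ∀ r, I₂ r = (4*J^2*Real.sqrt Real.pi/(5*q^6*Real.sqrt r)) *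
        ((128*r^4 + 192*r^3*q + 48*r^2*q^2 - 8*q^3*r + 3*q^4)/(r+q) ^ ((3:ℝ)/2)
          - 128*r ^ ((5:ℝ)/2))) :
    ∀ r, 0 < r → 0 ≤ I₁ r - I₂ r / 5 :=
  I1_minus_I2_div5_nonneg_general J q hq I₁ I₂ hI₁ hI₂
end
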